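/- Let η₀, ω₀, σ₁ and ω₁ be smooth real-valued functions on the open half-plane ℝ²₊ with η₀ > 0, set ω̄₁ = ω₁/η₀² and r = √(ρ²+z²). Suppose: (i) ³Δ(ln η₀) = -|∂ω₀|²/η₀² on ℝ²₊; (ii) there is a constant C₀ > 0 with |∂ω₀|²/η₀² ≤ C₀/r² pointwise; (iii) ω̄₁ has compact support contained in ℝ²₊. Define the pointwise energy density ε = |∂σ₁ + ω̄₁ ∂ω₀|² + |∂(ω₁ η₀^{-1}) - η₀^{-1} σ₁ ∂ω₀|² + |η₀^{-1} σ₁ ∂ω₀ - ω̄₁ ∂η₀|², and let M > 0 satisfy ∫_{ℝ²₊} ε ρ dρ dz ≤ M and ∫_{ℝ²₊} (σ₁²/r²) ρ dρ dz ≤ M. Assume all integrands appearing below are integrable with respect to ρ dρ dz. Then there exists a constant C > 0, depending only on C₀, such that ∫_{ℝ²₊} ( (1/2) η₀² |∂ω̄₁|² + |∂η₀|² ω̄₁² + |∂σ₁|² + σ₁²/r² ) ρ dρ dz ≤ C M. -/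

import Mathlib

open MeasureTheory Real

noncomputable section

/-- The open half-plane `{(ρ, z) : ρ > 0}`. -/
def halfPlane : Set (ℝ × ℝ) := {p | 0 < p.1}

/-- Partial derivative with respect to the first variable `ρ`. -/
noncomputable def pdρ (f : ℝ × ℝ → ℝ) (p : ℝ × ℝ) : ℝ := fderiv ℝ f p (1, 0)

/-- Partial derivative with respect to the second variable `z`. -/
noncomputable def pdz (f : ℝ × ℝ → ℝ) (p : ℝ × ℝ) : ℝ := fderiv ℝ f p (0, 1)

/-- `|∂f|² = (∂_ρ f)² + (∂_z f)²`. -/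
noncomputable def gradSq (f : ℝ × ℝ → ℝ) (p : ℝ × ℝ) : ℝ := (pdρ f p) ^ 2 + (pdz f p) ^ 2

/-- `∂f·∂g = ∂_ρ f ∂_ρ g + ∂_z f ∂_z g`. -/
noncomputable def gradDot (f g : ℝ × ℝ → ℝ) (p : ℝ × ℝ) : ℝ :=
  pdρ f p * pdρ g p + pdz f p * pdz g p

/-- Flat 2-dimensional Laplacian `Δf = ∂²_ρ f + ∂²_z f`. -/
noncomputable def lap2 (f : ℝ × ℝ → ℝ) (p : ℝ × ℝ) : ℝ := pdρ (pdρ f) p + pdz (pdz f) p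

/-- `³Δf = Δf + ∂_ρ f / ρ`. -/
noncomputable def lap3 (f : ℝ × ℝ → ℝ) (p : ℝ × ℝ) : ℝ := lap2 f p + pdρ f p / p.1

/-- `⁷Δf = Δf + 5 ∂_ρ f / ρ`. -/
noncomputable def lap7 (f : ℝ × ℝ → ℝ) (p : ℝ × ℝ) : ℝ := lap2 f p + 5 * pdρ f p / p.1

/-- `ω̄₁ = ω₁ / η₀²`. -/
noncomputable def omegaBar (η₀ ω₁ : ℝ × ℝ → ℝ) : ℝ × ℝ → ℝ := fun p => ω₁ p / (η₀ p) ^ 2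

/-- Distance `r = √(ρ² + z²)` to the origin. -/
noncomputable def rr (p : ℝ × ℝ) : ℝ := Real.sqrt (p.1 ^ 2 + p.2 ^ 2)

/-- The (stationary part of the) energy density
`ε = |∂σ₁ + ω̄₁ ∂ω₀|² + |∂(ω₁ η₀⁻¹) - η₀⁻¹ σ₁ ∂ω₀|² + |η₀⁻¹ σ₁ ∂ω₀ - ω̄₁ ∂η₀|²`. -/
noncomputable def eps (η₀ ω₀ σ₁ ω₁ : ℝ × ℝ → ℝ) (p : ℝ × ℝ) : ℝ :=
  ((pdρ σ₁ p + omegaBar η₀ ω₁ p * pdρ ω₀ p) ^ 2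
      + (pdz σ₁ p + omegaBar η₀ ω₁ p * pdz ω₀ p) ^ 2)
    + ((pdρ (fun q => ω₁ q / η₀ q) p - σ₁ p / η₀ p * pdρ ω₀ p) ^ 2
      + (pdz (fun q => ω₁ q / η₀ q) p - σ₁ p / η₀ p * pdz ω₀ p) ^ 2)
    + ((σ₁ p / η₀ p * pdρ ω₀ p - omegaBar η₀ ω₁ p * pdρ η₀ p) ^ 2
      + (σ₁ p / η₀ p * pdz ω₀ p - omegaBar η₀ ω₁ p * pdz η₀ p) ^ 2)

/-! ### Auxiliary lemmas -/

lemma isOpen_halfPlane : IsOpen halfPlane := isOpen_lt continuous_const continuous_fst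

lemma pd_mul (v : ℝ × ℝ) {f g : ℝ × ℝ → ℝ} {p : ℝ × ℝ}
    (hf : DifferentiableAt ℝ f p) (hg : DifferentiableAt ℝ g p) :
    fderiv ℝ (fun q => f q * g q) p v = f p * fderiv ℝ g p v + g p * fderiv ℝ f p v := by
  rw [fderiv_fun_mul hf hg]; simp

lemma pd_log (v : ℝ × ℝ) {f : ℝ × ℝ → ℝ} {p : ℝ × ℝ}
    (hf : DifferentiableAt ℝ f p) (h0 : f p ≠ 0) :
    fderiv ℝ (fun q => Real.log (f q)) p v = fderiv ℝ f p v / f p := by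
  rw [(hf.hasFDerivAt.log h0).fderiv]
  simp [div_eq_inv_mul]

lemma pd_fst1 (p : ℝ × ℝ) :
    fderiv ℝ (fun q : ℝ × ℝ => q.1) p (1, 0) = 1 := by
  have : fderiv ℝ (fun q : ℝ × ℝ => q.1) p = ContinuousLinearMap.fst ℝ ℝ ℝ := fderiv_fst
  rw [this]; rfl

lemma pd_fst2 (p : ℝ × ℝ) :
    fderiv ℝ (fun q : ℝ × ℝ => q.1) p (0, 1) = 0 := by
  have : fderiv ℝ (fun q : ℝ × ℝ => q.1) p = ContinuousLinearMap.fst ℝ ℝ ℝ := fderiv_fst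
  rw [this]; rfl

lemma pd_zero_of_locally_zero {f : ℝ × ℝ → ℝ} {p : ℝ × ℝ}
    (h : ∀ᶠ q in nhds p, f q = 0) : fderiv ℝ f p = 0 := by
  have h' : f =ᶠ[nhds p] (fun _ => (0:ℝ)) := h
  rw [h'.fderiv_eq]; exact fderiv_const_apply 0

lemma diffAt {f : ℝ × ℝ → ℝ} (hf : ContDiffOn ℝ (⊤ : ℕ∞) f halfPlane) {p : ℝ × ℝ}
    (hp : p ∈ halfPlane) : DifferentiableAt ℝ f p :=
  (hf.contDiffAt (isOpen_halfPlane.mem_nhds hp)).differentiableAt (by simp)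

lemma pdv_contDiffOn {f : ℝ × ℝ → ℝ} (hf : ContDiffOn ℝ (⊤ : ℕ∞) f halfPlane) (v : ℝ × ℝ) :
    ContDiffOn ℝ (⊤ : ℕ∞) (fun p => fderiv ℝ f p v) halfPlane := by
  have h1 : ContDiffOn ℝ (⊤ : ℕ∞) (fun p => fderiv ℝ f p) halfPlane :=
    hf.fderiv_of_isOpen isOpen_halfPlane (by simp)
  exact (ContinuousLinearMap.apply ℝ ℝ v).contDiff.comp_contDiffOn h1

lemma glue_cont {g : ℝ × ℝ → ℝ} {K : Set (ℝ × ℝ)} (hKcl : IsClosed K) (hKU : K ⊆ halfPlane)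
    (hg : ContinuousOn g halfPlane) (h0 : ∀ p ∉ K, g p = 0) : Continuous g := by
  rw [continuous_iff_continuousAt]
  intro p
  by_cases hp : p ∈ halfPlane
  · exact hg.continuousAt (isOpen_halfPlane.mem_nhds hp)
  · have hmem : Kᶜ ∈ nhds p := hKcl.isOpen_compl.mem_nhds (fun h => hp (hKU h))
    have h1 : g =ᶠ[nhds p] (fun _ => (0:ℝ)) := by
      filter_upwards [hmem] with q hq using h0 q hq
    exact ContinuousAt.congr continuousAt_const h1.symm

lemma integral_div_zero (V₁ V₂ : ℝ × ℝ → ℝ) (hd1 : Differentiable ℝ V₁)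
    (hd2 : Differentiable ℝ V₂) {K : Set (ℝ × ℝ)} (hK : IsCompact K)
    (h1 : ∀ p ∉ K, V₁ p = 0) (h2 : ∀ p ∉ K, V₂ p = 0)
    (hcont : Continuous (fun p => fderiv ℝ V₁ p (1, 0) + fderiv ℝ V₂ p (0, 1))) :
    ∫ p : ℝ × ℝ, (fderiv ℝ V₁ p (1, 0) + fderiv ℝ V₂ p (0, 1)) = 0 := by
  obtain ⟨R, hR⟩ := hK.isBounded.subset_closedBall 0
  set R' : ℝ := max R 0 + 1 with hR'def
  have hRR' : R < R' := lt_of_le_of_lt (le_max_left _ _) (lt_add_one _)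
  have hR'pos : 0 < R' := by positivity
  have hKball : ∀ p ∈ K, max |p.1| |p.2| ≤ R := by
    intro p hp
    have := hR hp
    rw [Metric.mem_closedBall, dist_zero_right] at this
    have hnorm : ‖p‖ = max ‖p.1‖ ‖p.2‖ := rfl
    rw [hnorm] at this
    simpa [Real.norm_eq_abs] using this
  have hnotK : ∀ p : ℝ × ℝ, R' ≤ max |p.1| |p.2| → p ∉ K := by
    intro p hp hmem
    exact absurd (le_trans hp (hKball p hmem)) (not_le.mpr hRR')
  set a : ℝ × ℝ := (-R', -R') with hadef
  set b : ℝ × ℝ := (R', R') with hbdef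
  have hle : a ≤ b := ⟨by simp [hadef, hbdef]; linarith, by simp [hadef, hbdef]; linarith⟩
  have hdiv0 : ∀ p ∉ K, fderiv ℝ V₁ p (1, 0) + fderiv ℝ V₂ p (0, 1) = 0 := by
    intro p hp
    have hnb : Kᶜ ∈ nhds p := hK.isClosed.isOpen_compl.mem_nhds hp
    have e1 : fderiv ℝ V₁ p = 0 := pd_zero_of_locally_zero
      (by filter_upwards [hnb] with q hq using h1 q hq)
    have e2 : fderiv ℝ V₂ p = 0 := pd_zero_of_locally_zero
      (by filter_upwards [hnb] with q hq using h2 q hq)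
    simp [e1, e2]
  have Hi : IntegrableOn (fun p => fderiv ℝ V₁ p (1, 0) + fderiv ℝ V₂ p (0, 1))
      (Set.Icc a b) := hcont.continuousOn.integrableOn_compact isCompact_Icc
  have key := integral_divergence_prod_Icc_of_hasFDerivAt_off_countable_of_le V₁ V₂
      (fun p => fderiv ℝ V₁ p) (fun p => fderiv ℝ V₂ p) a b hle ∅ Set.countable_empty
      hd1.continuous.continuousOn hd2.continuous.continuousOn
      (fun x _ => (hd1 x).hasFDerivAt) (fun x _ => (hd2 x).hasFDerivAt) Hi
  have hb2b : ∀ x : ℝ, V₂ (x, b.2) = 0 := by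
    intro x
    refine h2 _ (hnotK _ ?_)
    simp only [hbdef]
    calc R' ≤ |R'| := le_abs_self _
    _ ≤ max |x| |R'| := le_max_right _ _
  have hb2a : ∀ x : ℝ, V₂ (x, a.2) = 0 := by
    intro x
    refine h2 _ (hnotK _ ?_)
    simp only [hadef]
    calc R' ≤ |(-R')| := by rw [abs_neg, abs_of_pos hR'pos]
    _ ≤ max |x| |(-R')| := le_max_right _ _
  have hb1b : ∀ y : ℝ, V₁ (b.1, y) = 0 := by
    intro y
    refine h1 _ (hnotK _ ?_)
    simp only [hbdef]
    calc R' ≤ |R'| := le_abs_self _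
    _ ≤ max |R'| |y| := le_max_left _ _
  have hb1a : ∀ y : ℝ, V₁ (a.1, y) = 0 := by
    intro y
    refine h1 _ (hnotK _ ?_)
    simp only [hadef]
    calc R' ≤ |(-R')| := by rw [abs_neg, abs_of_pos hR'pos]
    _ ≤ max |(-R')| |y| := le_max_left _ _
  rw [show (fun x => V₂ (x, b.2)) = (fun _ => (0:ℝ)) from funext hb2b,
      show (fun x => V₂ (x, a.2)) = (fun _ => (0:ℝ)) from funext hb2a,
      show (fun y => V₁ (b.1, y)) = (fun _ => (0:ℝ)) from funext hb1b,
      show (fun y => V₁ (a.1, y)) = (fun _ => (0:ℝ)) from funext hb1a] at key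
  simp only [intervalIntegral.integral_const, smul_zero, sub_zero, zero_add, add_zero,
    zero_sub, neg_zero, sub_self] at key
  have hIccK : ∀ p : ℝ × ℝ, p ∉ Set.Icc a b → p ∉ K := by
    intro p hp hmem
    apply hp
    have hm := hKball p hmem
    have h1' := le_trans (le_max_left _ _) hm
    have h2' := le_trans (le_max_right _ _) hm
    rw [abs_le] at h1' h2'
    constructor
    · constructor
      · simp only [hadef]; linarith [h1'.1]
      · simp only [hadef]; linarith [h2'.1]
    · constructor
      · simp only [hbdef]; linarith [h1'.2]
      · simp only [hbdef]; linarith [h2'.2]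
  have hext : ∫ p in Set.Icc a b, (fderiv ℝ V₁ p (1, 0) + fderiv ℝ V₂ p (0, 1)) =
      ∫ p : ℝ × ℝ, (fderiv ℝ V₁ p (1, 0) + fderiv ℝ V₂ p (0, 1)) :=
    setIntegral_eq_integral_of_forall_compl_eq_zero (fun p hp => hdiv0 p (hIccK p hp))
  rw [← hext, key]

lemma alg1 (n w s X X' H H' W W' S S' : ℝ) :
    (1/2)*n^2*(X^2+X'^2) ≤ ((S+w*W)^2+(S'+w*W')^2)
      + ((n*X+w*H-s*W)^2+(n*X'+w*H'-s*W')^2) + ((s*W-w*H)^2+(s*W'-w*H')^2) := by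
  nlinarith [sq_nonneg ((n*X+w*H-s*W)-(s*W-w*H)), sq_nonneg ((n*X'+w*H'-s*W')-(s*W'-w*H')),
    sq_nonneg (S+w*W), sq_nonneg (S'+w*W')]

lemma alg2 (n w s X X' H H' W W' S S' : ℝ) :
    w^2*(H^2+H'^2) ≤ 2*(((S+w*W)^2+(S'+w*W')^2)
      + ((n*X+w*H-s*W)^2+(n*X'+w*H'-s*W')^2) + ((s*W-w*H)^2+(s*W'-w*H')^2))
      + 2*(s^2*(W^2+W'^2)) := by
  nlinarith [sq_nonneg (2*s*W-w*H), sq_nonneg (2*s*W'-w*H'), sq_nonneg (S+w*W), sq_nonneg (S'+w*W'),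
    sq_nonneg (n*X+w*H-s*W), sq_nonneg (n*X'+w*H'-s*W')]

lemma alg3 (n w s X X' H H' W W' S S' : ℝ) :
    S^2+S'^2 ≤ 2*(((S+w*W)^2+(S'+w*W')^2)
      + ((n*X+w*H-s*W)^2+(n*X'+w*H'-s*W')^2) + ((s*W-w*H)^2+(s*W'-w*H')^2))
      + 2*(w^2*(W^2+W'^2)) := by
  nlinarith [sq_nonneg (S+2*w*W), sq_nonneg (S'+2*w*W'), sq_nonneg (n*X+w*H-s*W),
    sq_nonneg (n*X'+w*H'-s*W'), sq_nonneg (s*W-w*H), sq_nonneg (s*W'-w*H')]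

lemma alg4 (n w s X X' H H' W W' S S' : ℝ) :
    2*w*n*(X*H+X'*H') + 2*w^2*(H^2+H'^2) ≤ 9*(((S+w*W)^2+(S'+w*W')^2)
      + ((n*X+w*H-s*W)^2+(n*X'+w*H'-s*W')^2) + ((s*W-w*H)^2+(s*W'-w*H')^2))
      + 8*(s^2*(W^2+W'^2)) := by
  nlinarith [sq_nonneg (n*X-2*w*H), sq_nonneg (n*X'-2*w*H'), alg1 n w s X X' H H' W W' S S',
    alg2 n w s X X' H H' W W' S S']

set_option maxHeartbeats 2000000 in
theorem first_order_integral_estimate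
    (C₀ : ℝ) (hC₀ : 0 < C₀) :
    ∃ C : ℝ, 0 < C ∧
      ∀ η₀ ω₀ σ₁ ω₁ : ℝ × ℝ → ℝ,
        ContDiffOn ℝ (⊤ : ℕ∞) η₀ halfPlane → ContDiffOn ℝ (⊤ : ℕ∞) ω₀ halfPlane →
        ContDiffOn ℝ (⊤ : ℕ∞) σ₁ halfPlane → ContDiffOn ℝ (⊤ : ℕ∞) ω₁ halfPlane →
        (∀ p ∈ halfPlane, 0 < η₀ p) →
        (∀ p ∈ halfPlane,
          lap3 (fun q => Real.log (η₀ q)) p = - (gradSq ω₀ p / (η₀ p) ^ 2)) →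
        (∀ p ∈ halfPlane, gradSq ω₀ p / (η₀ p) ^ 2 ≤ C₀ / (rr p) ^ 2) →
        HasCompactSupport (omegaBar η₀ ω₁) →
        tsupport (omegaBar η₀ ω₁) ⊆ halfPlane →
        ∀ M : ℝ, 0 < M →
        (∫ p in halfPlane, eps η₀ ω₀ σ₁ ω₁ p * p.1) ≤ M →
        (∫ p in halfPlane, (σ₁ p) ^ 2 / (rr p) ^ 2 * p.1) ≤ M →
        IntegrableOn (fun p => eps η₀ ω₀ σ₁ ω₁ p * p.1) halfPlane →
        IntegrableOn (fun p =>
          (η₀ p) ^ 2 * gradSq (omegaBar η₀ ω₁) p * p.1) halfPlane →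
        IntegrableOn (fun p =>
          gradSq η₀ p * (omegaBar η₀ ω₁ p) ^ 2 * p.1) halfPlane →
        IntegrableOn (fun p => gradSq σ₁ p * p.1) halfPlane →
        IntegrableOn (fun p => (σ₁ p) ^ 2 / (rr p) ^ 2 * p.1) halfPlane →
        (∫ p in halfPlane,
            ((1 / 2) * (η₀ p) ^ 2 * gradSq (omegaBar η₀ ω₁) p
              + gradSq η₀ p * (omegaBar η₀ ω₁ p) ^ 2
              + gradSq σ₁ p
              + (σ₁ p) ^ 2 / (rr p) ^ 2) * p.1) ≤ C * M := by
  refine ⟨24 + 18 * C₀, by linarith, ?_⟩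
  intro η₀ ω₀ σ₁ ω₁ hη₀s hω₀s hσ₁s hω₁s hηpos hell hbound hcs hts M hM hεM hσM hIε hI1 hI2 hI3 hI4
  have hUo : IsOpen halfPlane := isOpen_halfPlane
  have hUm : MeasurableSet halfPlane := hUo.measurableSet
  set w : ℝ × ℝ → ℝ := omegaBar η₀ ω₁ with hwdef
  set K : Set (ℝ × ℝ) := tsupport w with hKdef
  have hKc : IsCompact K := hcs
  have hKcl : IsClosed K := isClosed_tsupport _
  have hKU : K ⊆ halfPlane := hts
  have hw0 : ∀ p ∉ K, w p = 0 := fun p hp => image_eq_zero_of_notMem_tsupport hp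
  have hηne : ∀ p ∈ halfPlane, η₀ p ≠ 0 := fun p hp => (hηpos p hp).ne'
  have hws : ContDiffOn ℝ (⊤ : ℕ∞) w halfPlane := by
    rw [hwdef]
    exact hω₁s.div (hη₀s.pow 2) (fun p hp => pow_ne_zero 2 (hηne p hp))
  set F : ℝ × ℝ → ℝ := fun q => Real.log (η₀ q) with hFdef
  have hFs : ContDiffOn ℝ (⊤ : ℕ∞) F halfPlane := hη₀s.log hηne
  set φ : ℝ × ℝ → ℝ := fun p => (w p * w p) * (η₀ p * η₀ p) with hφdef
  have hφs : ContDiffOn ℝ (⊤ : ℕ∞) φ halfPlane := (hws.mul hws).mul (hη₀s.mul hη₀s)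
  have hφ0 : ∀ p ∉ K, φ p = 0 := fun p hp => by simp [hφdef, hw0 p hp]
  have hwval : ∀ p, w p = ω₁ p / η₀ p ^ 2 := fun p => rfl
  -- product rule for ω₁/η₀
  have hprod : ∀ p ∈ halfPlane, ∀ v : ℝ × ℝ,
      fderiv ℝ (fun q => ω₁ q / η₀ q) p v
        = η₀ p * fderiv ℝ w p v + w p * fderiv ℝ η₀ p v := by
    intro p hp v
    have hev : (fun q => ω₁ q / η₀ q) =ᶠ[nhds p] (fun q => w q * η₀ q) := by
      filter_upwards [hUo.mem_nhds hp] with q hq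
      rw [hwval q]
      field_simp [hηne q hq]
    rw [hev.fderiv_eq, pd_mul v (diffAt hws hp) (diffAt hη₀s hp)]
    ring
  -- derivative of φ
  have hφd : ∀ p ∈ halfPlane, ∀ v : ℝ × ℝ,
      fderiv ℝ φ p v = 2*w p*(η₀ p*η₀ p)*fderiv ℝ w p v + 2*(w p*w p)*η₀ p*fderiv ℝ η₀ p v := by
    intro p hp v
    rw [hφdef]
    rw [pd_mul (f := fun q => w q * w q) (g := fun q => η₀ q * η₀ q) v ((diffAt hws hp).mul (diffAt hws hp)) ((diffAt hη₀s hp).mul (diffAt hη₀s hp)),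
        pd_mul v (diffAt hws hp) (diffAt hws hp), pd_mul v (diffAt hη₀s hp) (diffAt hη₀s hp)]
    ring
  -- derivative of F = log η₀
  have hFd : ∀ p ∈ halfPlane, ∀ v : ℝ × ℝ,
      fderiv ℝ F p v = fderiv ℝ η₀ p v / η₀ p := by
    intro p hp v
    rw [hFdef]
    exact pd_log v (diffAt hη₀s hp) (hηne p hp)
  -- second derivatives of F
  have hFρs : ContDiffOn ℝ (⊤ : ℕ∞) (pdρ F) halfPlane := pdv_contDiffOn hFs (1, 0)
  have hFzs : ContDiffOn ℝ (⊤ : ℕ∞) (pdz F) halfPlane := pdv_contDiffOn hFs (0, 1)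
  have hfst : ∀ p : ℝ × ℝ, DifferentiableAt ℝ (fun q : ℝ × ℝ => q.1) p :=
    fun p => differentiableAt_fst
  have hφd0 : ∀ p ∉ K, fderiv ℝ φ p = 0 := by
    intro p hp
    apply pd_zero_of_locally_zero
    filter_upwards [hKcl.isOpen_compl.mem_nhds hp] with q hq using hφ0 q hq
  have hV1d : Differentiable ℝ (fun p => (φ p * pdρ F p) * p.1) := by
    intro p
    by_cases hp : p ∈ halfPlane
    · exact ((diffAt hφs hp).mul (diffAt hFρs hp)).mul (hfst p)
    · have hnb : Kᶜ ∈ nhds p := hKcl.isOpen_compl.mem_nhds (fun h => hp (hKU h))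
      have hev : (fun p => (φ p * pdρ F p) * p.1) =ᶠ[nhds p] (fun _ => (0:ℝ)) := by
        filter_upwards [hnb] with q hq
        simp [hφ0 q hq]
      exact (differentiableAt_const (0:ℝ)).congr_of_eventuallyEq hev
  have hV2d : Differentiable ℝ (fun p => (φ p * pdz F p) * p.1) := by
    intro p
    by_cases hp : p ∈ halfPlane
    · exact ((diffAt hφs hp).mul (diffAt hFzs hp)).mul (hfst p)
    · have hnb : Kᶜ ∈ nhds p := hKcl.isOpen_compl.mem_nhds (fun h => hp (hKU h))
      have hev : (fun p => (φ p * pdz F p) * p.1) =ᶠ[nhds p] (fun _ => (0:ℝ)) := by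
        filter_upwards [hnb] with q hq
        simp [hφ0 q hq]
      exact (differentiableAt_const (0:ℝ)).congr_of_eventuallyEq hev
  have hdivU : ∀ p ∈ halfPlane,
      fderiv ℝ (fun q => (φ q * pdρ F q) * q.1) p (1,0)
        + fderiv ℝ (fun q => (φ q * pdz F q) * q.1) p (0,1)
        = (gradDot φ F p + φ p * lap3 F p) * p.1 := by
    intro p hp
    have hρ : (0:ℝ) < p.1 := hp
    rw [pd_mul (f := fun q => φ q * pdρ F q) (1,0) ((diffAt hφs hp).mul (diffAt hFρs hp)) (hfst p),
        pd_mul (f := fun q => φ q * pdz F q) (0,1) ((diffAt hφs hp).mul (diffAt hFzs hp)) (hfst p),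
        pd_fst1, pd_fst2,
        pd_mul (1,0) (diffAt hφs hp) (diffAt hFρs hp),
        pd_mul (0,1) (diffAt hφs hp) (diffAt hFzs hp)]
    simp only [gradDot, lap3, lap2, pdρ, pdz]
    field_simp
    ring
  have hqd0 : ∀ p ∉ K, (gradDot φ F p + φ p * lap3 F p) * p.1 = 0 := by
    intro p hp
    simp only [gradDot, pdρ, pdz, hφd0 p hp, hφ0 p hp, ContinuousLinearMap.zero_apply]
    ring
  have hV10 : ∀ p ∉ K, (φ p * pdρ F p) * p.1 = 0 := by intro p hp; simp [hφ0 p hp]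
  have hV20 : ∀ p ∉ K, (φ p * pdz F p) * p.1 = 0 := by intro p hp; simp [hφ0 p hp]
  have hfun_eq : (fun p => fderiv ℝ (fun q => (φ q * pdρ F q) * q.1) p (1,0)
      + fderiv ℝ (fun q => (φ q * pdz F q) * q.1) p (0,1))
      = fun p => (gradDot φ F p + φ p * lap3 F p) * p.1 := by
    funext p
    by_cases hp : p ∈ halfPlane
    · exact hdivU p hp
    · have hpK : p ∉ K := fun h => hp (hKU h)
      have hnb : Kᶜ ∈ nhds p := hKcl.isOpen_compl.mem_nhds hpK
      have e1 : fderiv ℝ (fun q => (φ q * pdρ F q) * q.1) p = 0 :=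
        pd_zero_of_locally_zero (by filter_upwards [hnb] with q hq; simp [hφ0 q hq])
      have e2 : fderiv ℝ (fun q => (φ q * pdz F q) * q.1) p = 0 :=
        pd_zero_of_locally_zero (by filter_upwards [hnb] with q hq; simp [hφ0 q hq])
      rw [hqd0 p hpK, e1, e2]
      simp
  have hqdcontOn : ContinuousOn (fun p => (gradDot φ F p + φ p * lap3 F p) * p.1) halfPlane := by
    apply ContinuousOn.mul ?_ continuous_fst.continuousOn
    apply ContinuousOn.add
    · exact ((pdv_contDiffOn hφs (1,0)).continuousOn.mul (pdv_contDiffOn hFs (1,0)).continuousOn).add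
        ((pdv_contDiffOn hφs (0,1)).continuousOn.mul (pdv_contDiffOn hFs (0,1)).continuousOn)
    · apply ContinuousOn.mul hφs.continuousOn
      exact ((pdv_contDiffOn hFρs (1,0)).continuousOn.add
          (pdv_contDiffOn hFzs (0,1)).continuousOn).add
        ((pdv_contDiffOn hFs (1,0)).continuousOn.div continuous_fst.continuousOn
          (fun p hp => ne_of_gt hp))
  have hqdcont : Continuous (fun p => (gradDot φ F p + φ p * lap3 F p) * p.1) :=
    glue_cont hKcl hKU hqdcontOn hqd0
  have hdivint := integral_div_zero (fun p => (φ p * pdρ F p) * p.1)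
      (fun p => (φ p * pdz F p) * p.1) hV1d hV2d hKc hV10 hV20
      (by rw [hfun_eq]; exact hqdcont)
  rw [hfun_eq] at hdivint
  have hqdU : ∫ p in halfPlane, (gradDot φ F p + φ p * lap3 F p) * p.1 = 0 := by
    rw [setIntegral_eq_integral_of_forall_compl_eq_zero
      (fun p hp => hqd0 p (fun h => hp (hKU h)))]
    exact hdivint
  -- integrability of the IBP integrands
  have hq20 : ∀ p ∉ K, gradDot φ F p * p.1 = 0 := by
    intro p hp
    simp only [gradDot, pdρ, pdz, hφd0 p hp, ContinuousLinearMap.zero_apply]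
    ring
  have hq2contOn : ContinuousOn (fun p => gradDot φ F p * p.1) halfPlane := by
    apply ContinuousOn.mul ?_ continuous_fst.continuousOn
    exact ((pdv_contDiffOn hφs (1,0)).continuousOn.mul (pdv_contDiffOn hFs (1,0)).continuousOn).add
        ((pdv_contDiffOn hφs (0,1)).continuousOn.mul (pdv_contDiffOn hFs (0,1)).continuousOn)
  have hq2int : IntegrableOn (fun p => gradDot φ F p * p.1) halfPlane :=
    ((glue_cont hKcl hKU hq2contOn hq20).integrable_of_hasCompactSupport
      (HasCompactSupport.intro hKc hq20)).integrableOn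
  have hqdint : IntegrableOn (fun p => (gradDot φ F p + φ p * lap3 F p) * p.1) halfPlane :=
    (hqdcont.integrable_of_hasCompactSupport (HasCompactSupport.intro hKc hqd0)).integrableOn
  have hJ0 : ∀ p ∉ K, w p ^ 2 * gradSq ω₀ p * p.1 = 0 := by
    intro p hp; simp [hw0 p hp]
  have hJcontOn : ContinuousOn (fun p => w p ^ 2 * gradSq ω₀ p * p.1) halfPlane := by
    apply ContinuousOn.mul ?_ continuous_fst.continuousOn
    exact (hws.continuousOn.pow 2).mul
      (((pdv_contDiffOn hω₀s (1,0)).continuousOn.pow 2).add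
        ((pdv_contDiffOn hω₀s (0,1)).continuousOn.pow 2))
  have hJint : IntegrableOn (fun p => w p ^ 2 * gradSq ω₀ p * p.1) halfPlane :=
    ((glue_cont hKcl hKU hJcontOn hJ0).integrable_of_hasCompactSupport
      (HasCompactSupport.intro hKc hJ0)).integrableOn
  -- the pointwise identities for the IBP
  have hJeq : ∀ p ∈ halfPlane, w p ^ 2 * gradSq ω₀ p * p.1
      = gradDot φ F p * p.1 - (gradDot φ F p + φ p * lap3 F p) * p.1 := by
    intro p hp
    have hne := hηne p hp
    rw [hell p hp]
    have hφv : φ p = w p ^ 2 * η₀ p ^ 2 := by simp only [hφdef]; ring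
    rw [hφv]
    field_simp
    ring
  have hq2eq : ∀ p ∈ halfPlane, gradDot φ F p * p.1
      = (2*(w p*η₀ p)*gradDot w η₀ p + 2*(w p*w p)*gradSq η₀ p) * p.1 := by
    intro p hp
    have hne := hηne p hp
    simp only [gradDot, gradSq, pdρ, pdz]
    rw [hφd p hp (1,0), hφd p hp (0,1), hFd p hp (1,0), hFd p hp (0,1)]
    field_simp
    ring
  -- pointwise inequalities
  have hεexp : ∀ p ∈ halfPlane, eps η₀ ω₀ σ₁ ω₁ p =
      ((fderiv ℝ σ₁ p (1,0) + w p * fderiv ℝ ω₀ p (1,0))^2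
        + (fderiv ℝ σ₁ p (0,1) + w p * fderiv ℝ ω₀ p (0,1))^2)
      + ((η₀ p * fderiv ℝ w p (1,0) + w p * fderiv ℝ η₀ p (1,0)
            - σ₁ p / η₀ p * fderiv ℝ ω₀ p (1,0))^2
        + (η₀ p * fderiv ℝ w p (0,1) + w p * fderiv ℝ η₀ p (0,1)
            - σ₁ p / η₀ p * fderiv ℝ ω₀ p (0,1))^2)
      + ((σ₁ p / η₀ p * fderiv ℝ ω₀ p (1,0) - w p * fderiv ℝ η₀ p (1,0))^2
        + (σ₁ p / η₀ p * fderiv ℝ ω₀ p (0,1) - w p * fderiv ℝ η₀ p (0,1))^2) := by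
    intro p hp
    simp only [eps, pdρ, pdz, ← hwdef]
    rw [hprod p hp (1,0), hprod p hp (0,1)]
  have hWb : ∀ p ∈ halfPlane, (σ₁ p / η₀ p)^2
      * ((fderiv ℝ ω₀ p (1,0))^2 + (fderiv ℝ ω₀ p (0,1))^2) ≤ C₀ * (σ₁ p^2 / rr p^2) := by
    intro p hp
    have hne := hηne p hp
    have hb := hbound p hp
    simp only [gradSq, pdρ, pdz] at hb
    have h1 : (σ₁ p / η₀ p)^2 * ((fderiv ℝ ω₀ p (1,0))^2 + (fderiv ℝ ω₀ p (0,1))^2)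
        = σ₁ p^2 * (((fderiv ℝ ω₀ p (1,0))^2 + (fderiv ℝ ω₀ p (0,1))^2) / η₀ p^2) := by
      field_simp
    rw [h1]
    have h2 := mul_le_mul_of_nonneg_left hb (sq_nonneg (σ₁ p))
    have h3 : σ₁ p^2 * (C₀ / rr p^2) = C₀ * (σ₁ p^2 / rr p^2) := by ring
    linarith
  have hpt1 : ∀ p ∈ halfPlane,
      (1/2) * (η₀ p^2 * gradSq w p * p.1) ≤ eps η₀ ω₀ σ₁ ω₁ p * p.1 := by
    intro p hp
    have hρ : (0:ℝ) < p.1 := hp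
    rw [hεexp p hp]
    simp only [gradSq, pdρ, pdz]
    have base := alg1 (η₀ p) (w p) (σ₁ p / η₀ p) (fderiv ℝ w p (1,0)) (fderiv ℝ w p (0,1))
      (fderiv ℝ η₀ p (1,0)) (fderiv ℝ η₀ p (0,1)) (fderiv ℝ ω₀ p (1,0)) (fderiv ℝ ω₀ p (0,1))
      (fderiv ℝ σ₁ p (1,0)) (fderiv ℝ σ₁ p (0,1))
    nlinarith [mul_le_mul_of_nonneg_right base hρ.le]
  have hpt2 : ∀ p ∈ halfPlane, gradSq η₀ p * w p ^ 2 * p.1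
      ≤ 2 * (eps η₀ ω₀ σ₁ ω₁ p * p.1) + (2*C₀) * (σ₁ p ^ 2 / rr p ^ 2 * p.1) := by
    intro p hp
    have hρ : (0:ℝ) < p.1 := hp
    rw [hεexp p hp]
    simp only [gradSq, pdρ, pdz]
    have base := alg2 (η₀ p) (w p) (σ₁ p / η₀ p) (fderiv ℝ w p (1,0)) (fderiv ℝ w p (0,1))
      (fderiv ℝ η₀ p (1,0)) (fderiv ℝ η₀ p (0,1)) (fderiv ℝ ω₀ p (1,0)) (fderiv ℝ ω₀ p (0,1))
      (fderiv ℝ σ₁ p (1,0)) (fderiv ℝ σ₁ p (0,1))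
    nlinarith [mul_le_mul_of_nonneg_right base hρ.le,
      mul_le_mul_of_nonneg_right (hWb p hp) hρ.le]
  have hpt3 : ∀ p ∈ halfPlane, gradSq σ₁ p * p.1
      ≤ 2 * (eps η₀ ω₀ σ₁ ω₁ p * p.1) + 2 * (w p ^ 2 * gradSq ω₀ p * p.1) := by
    intro p hp
    have hρ : (0:ℝ) < p.1 := hp
    rw [hεexp p hp]
    simp only [gradSq, pdρ, pdz]
    have base := alg3 (η₀ p) (w p) (σ₁ p / η₀ p) (fderiv ℝ w p (1,0)) (fderiv ℝ w p (0,1))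
      (fderiv ℝ η₀ p (1,0)) (fderiv ℝ η₀ p (0,1)) (fderiv ℝ ω₀ p (1,0)) (fderiv ℝ ω₀ p (0,1))
      (fderiv ℝ σ₁ p (1,0)) (fderiv ℝ σ₁ p (0,1))
    nlinarith [mul_le_mul_of_nonneg_right base hρ.le]
  have hpt4 : ∀ p ∈ halfPlane,
      (2*(w p*η₀ p)*gradDot w η₀ p + 2*(w p*w p)*gradSq η₀ p) * p.1
      ≤ 9 * (eps η₀ ω₀ σ₁ ω₁ p * p.1) + (8*C₀) * (σ₁ p ^ 2 / rr p ^ 2 * p.1) := by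
    intro p hp
    have hρ : (0:ℝ) < p.1 := hp
    rw [hεexp p hp]
    simp only [gradDot, gradSq, pdρ, pdz]
    have base := alg4 (η₀ p) (w p) (σ₁ p / η₀ p) (fderiv ℝ w p (1,0)) (fderiv ℝ w p (0,1))
      (fderiv ℝ η₀ p (1,0)) (fderiv ℝ η₀ p (0,1)) (fderiv ℝ ω₀ p (1,0)) (fderiv ℝ ω₀ p (0,1))
      (fderiv ℝ σ₁ p (1,0)) (fderiv ℝ σ₁ p (0,1))
    nlinarith [mul_le_mul_of_nonneg_right base hρ.le,
      mul_le_mul_of_nonneg_right (hWb p hp) hρ.le]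
  -- ascribed integrability facts
  have iε9 : IntegrableOn (fun p : ℝ × ℝ => 9 * (eps η₀ ω₀ σ₁ ω₁ p * p.1)) halfPlane :=
    hIε.const_mul 9
  have i48 : IntegrableOn (fun p : ℝ × ℝ => (8*C₀) * (σ₁ p ^ 2 / rr p ^ 2 * p.1)) halfPlane :=
    hI4.const_mul (8*C₀)
  have iS4 : IntegrableOn (fun p : ℝ × ℝ => 9 * (eps η₀ ω₀ σ₁ ω₁ p * p.1)
      + (8*C₀) * (σ₁ p ^ 2 / rr p ^ 2 * p.1)) halfPlane := iε9.add i48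
  have iε2 : IntegrableOn (fun p : ℝ × ℝ => 2 * (eps η₀ ω₀ σ₁ ω₁ p * p.1)) halfPlane :=
    hIε.const_mul 2
  have i42 : IntegrableOn (fun p : ℝ × ℝ => (2*C₀) * (σ₁ p ^ 2 / rr p ^ 2 * p.1)) halfPlane :=
    hI4.const_mul (2*C₀)
  have iS2 : IntegrableOn (fun p : ℝ × ℝ => 2 * (eps η₀ ω₀ σ₁ ω₁ p * p.1)
      + (2*C₀) * (σ₁ p ^ 2 / rr p ^ 2 * p.1)) halfPlane := iε2.add i42
  have iJ2 : IntegrableOn (fun p : ℝ × ℝ => 2 * (w p ^ 2 * gradSq ω₀ p * p.1)) halfPlane :=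
    hJint.const_mul 2
  have iS3 : IntegrableOn (fun p : ℝ × ℝ => 2 * (eps η₀ ω₀ σ₁ ω₁ p * p.1)
      + 2 * (w p ^ 2 * gradSq ω₀ p * p.1)) halfPlane := iε2.add iJ2
  have iT1 : IntegrableOn (fun p : ℝ × ℝ => (1/2) * (η₀ p^2 * gradSq w p * p.1)) halfPlane :=
    hI1.const_mul (1/2)
  have iS34 : IntegrableOn (fun p : ℝ × ℝ => gradSq σ₁ p * p.1
      + σ₁ p ^ 2 / rr p ^ 2 * p.1) halfPlane := hI3.add hI4
  have iS234 : IntegrableOn (fun p : ℝ × ℝ => gradSq η₀ p * w p ^ 2 * p.1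
      + (gradSq σ₁ p * p.1 + σ₁ p ^ 2 / rr p ^ 2 * p.1)) halfPlane := hI2.add iS34
  -- the integration-by-parts bound
  have hJle : ∫ p in halfPlane, w p ^ 2 * gradSq ω₀ p * p.1 ≤ 9*M + 8*C₀*M := by
    have e1 : ∫ p in halfPlane, w p ^ 2 * gradSq ω₀ p * p.1
        = ∫ p in halfPlane, (gradDot φ F p * p.1
            - (gradDot φ F p + φ p * lap3 F p) * p.1) :=
      setIntegral_congr_fun hUm (fun p hp => hJeq p hp)
    rw [e1, integral_sub hq2int hqdint, hqdU, sub_zero]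
    have hmono := setIntegral_mono_on
      (hq2int.congr_fun (fun p hp => hq2eq p hp) hUm)
      iS4 hUm hpt4
    have e2 : ∫ p in halfPlane, gradDot φ F p * p.1
        = ∫ p in halfPlane, (2*(w p*η₀ p)*gradDot w η₀ p + 2*(w p*w p)*gradSq η₀ p) * p.1 :=
      setIntegral_congr_fun hUm (fun p hp => hq2eq p hp)
    rw [e2]
    refine le_trans hmono ?_
    rw [integral_add iε9 i48, integral_const_mul, integral_const_mul]
    nlinarith [hεM, hσM]
  -- assemble
  have hb1 : ∫ p in halfPlane, (1/2) * (η₀ p^2 * gradSq w p * p.1) ≤ M :=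
    le_trans (setIntegral_mono_on iT1 hIε hUm hpt1) hεM
  have hb2 : ∫ p in halfPlane, gradSq η₀ p * w p ^ 2 * p.1 ≤ 2*M + 2*C₀*M := by
    have hmono := setIntegral_mono_on hI2 iS2 hUm hpt2
    refine le_trans hmono ?_
    rw [integral_add iε2 i42, integral_const_mul, integral_const_mul]
    nlinarith [hεM, hσM]
  have hb3 : ∫ p in halfPlane, gradSq σ₁ p * p.1 ≤ 2*M + 2*(9*M + 8*C₀*M) := by
    have hmono := setIntegral_mono_on hI3 iS3 hUm hpt3
    refine le_trans hmono ?_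
    rw [integral_add iε2 iJ2, integral_const_mul, integral_const_mul]
    nlinarith [hεM, hJle]
  have hfunsplit : (fun p : ℝ × ℝ => ((1 / 2) * η₀ p ^ 2 * gradSq w p
        + gradSq η₀ p * w p ^ 2 + gradSq σ₁ p + σ₁ p ^ 2 / rr p ^ 2) * p.1)
      = fun p => (1/2) * (η₀ p^2 * gradSq w p * p.1)
          + (gradSq η₀ p * w p ^ 2 * p.1 + (gradSq σ₁ p * p.1 + σ₁ p ^ 2 / rr p ^ 2 * p.1)) := by
    funext p; ring
  rw [hfunsplit, integral_add iT1 iS234, integral_add hI2 iS34, integral_add hI3 hI4]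
  nlinarith [hb1, hb2, hb3, hσM]
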